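/- Let 𝐏 be a probability measure on environments on ℤ² satisfying (C1), (C2), and (C3), let ℓ be a unit vector in ℝ², and assume P⁰(A_ℓ ∪ A_{−ℓ}) = 1. Then lim_{L→∞} P⁰(B_ℓ △ G_0^L) = 0, where △ denotes symmetric difference of events. In particular, lim_{L→∞} P⁰(G_0^L) = P⁰(B_ℓ). -/

import Mathlib

open MeasureTheory ProbabilityTheory Filter Topology

noncomputable section

/-- Vertices of `ℤ^d`. -/
abbrev Zd (d : ℕ) := Fin d → ℤ

/-- Trajectories of a walk on `ℤ^d`. -/
abbrev Traj (d : ℕ) := ℕ → Zd d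

/-- Embedding of `ℤ^d` into Euclidean `ℝ^d`. -/
def toE {d : ℕ} (x : Zd d) : EuclideanSpace ℝ (Fin d) := WithLp.toLp 2 (fun i => (x i : ℝ))

/-- Dot product of a lattice point with a real vector. -/
def dotl {d : ℕ} (x : Zd d) (ℓ : EuclideanSpace ℝ (Fin d)) : ℝ := ∑ i, (x i : ℝ) * ℓ i

/-- The space of environments on `ℤ^d`. -/
abbrev EnvSp (d : ℕ) :=
  {ω : Zd d → Zd d → ℝ // (∀ x y, 0 ≤ ω x y) ∧ ∀ x, HasSum (ω x) 1}

/-- `κ x ω` is the quenched law `P_ω^x` of the walk started at `x` in the environment `ω`,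
characterized by its cylinder probabilities. -/
def IsQuenched {d : ℕ} (κ : Zd d → Kernel (EnvSp d) (Traj d)) : Prop :=
  ∀ (x : Zd d) (ω : EnvSp d) (n : ℕ) (p : ℕ → Zd d),
    (κ x) ω {X | ∀ i ≤ n, X i = p i} =
      (if p 0 = x then 1 else 0) *
        ∏ i ∈ Finset.range n, ENNReal.ofReal (ω.1 (p i) (p (i + 1)))

/-- The annealed law `P^x`. -/
def ann {d : ℕ} (P : Measure (EnvSp d)) (κ : Zd d → Kernel (EnvSp d) (Traj d))
    (x : Zd d) : Measure (Traj d) :=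
  P.bind fun ω => (κ x) ω

/-- The annealed law `P^{a,b}` of two walks moving independently in a common environment. -/
def annPair {d : ℕ} (P : Measure (EnvSp d)) (κ : Zd d → Kernel (EnvSp d) (Traj d))
    (a b : Zd d) : Measure (Traj d × Traj d) :=
  P.bind fun ω => ((κ a) ω).prod ((κ b) ω)

/-- (C1): the transition probability vectors at the various sites are i.i.d. -/
def CondC1 {d : ℕ} (P : Measure (EnvSp d)) : Prop :=
  iIndepFun
    (fun x (ω : EnvSp d) => fun y : Zd d => ω.1 x (x + y)) P ∧
  ∀ x : Zd d,
    IdentDistrib (fun ω : EnvSp d => fun y : Zd d => ω.1 x (x + y))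
      (fun ω : EnvSp d => fun y : Zd d => ω.1 0 (0 + y)) P P

/-- (C2): jumps are bounded by `R`. -/
def CondC2 {d : ℕ} (P : Measure (EnvSp d)) (R : ℝ) : Prop :=
  0 < R ∧ ∀ᵐ ω ∂P, ∀ x y : Zd d, R < ‖toE x - toE y‖ → ω.1 x y = 0

/-- (C3): a generating set of steps that are a.s. available. -/
def CondC3 {d : ℕ} (P : Measure (EnvSp d)) : Prop :=
  ∃ N : Set (Zd d), AddSubmonoid.closure N = ⊤ ∧ ∀ y ∈ N, P {ω | 0 < ω.1 0 y} = 1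

/-- The event `A_ℓ` of transience in direction `ℓ`. -/
def Adir {d : ℕ} (ℓ : EuclideanSpace ℝ (Fin d)) : Set (Traj d) :=
  {X | Tendsto (fun n => dotl (X n) ℓ) atTop atTop}

/-- The event `A_{-ℓ}`. -/
def AdirNeg {d : ℕ} (ℓ : EuclideanSpace ℝ (Fin d)) : Set (Traj d) :=
  {X | Tendsto (fun n => dotl (X n) ℓ) atTop atBot}

/-- First hitting time of a set, valued in `ℕ∞`. -/
def hitTime {α : Type*} (A : Set α) (X : ℕ → α) : ℕ∞ :=
  ⨅ (k : ℕ) (_ : X k ∈ A), (k : ℕ∞)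

/-- `T_{<a}` (with respect to direction `ℓ`). -/
def Tlt {d : ℕ} (ℓ : EuclideanSpace ℝ (Fin d)) (a : ℝ) : Traj d → ℕ∞ :=
  hitTime {x | dotl x ℓ < a}

/-- `T_{≤a}`. -/
def Tle {d : ℕ} (ℓ : EuclideanSpace ℝ (Fin d)) (a : ℝ) : Traj d → ℕ∞ :=
  hitTime {x | dotl x ℓ ≤ a}

/-- `T_{>a}`. -/
def Tgt {d : ℕ} (ℓ : EuclideanSpace ℝ (Fin d)) (a : ℝ) : Traj d → ℕ∞ :=
  hitTime {x | a < dotl x ℓ}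

/-- `T_{≥a}`. -/
def Tge {d : ℕ} (ℓ : EuclideanSpace ℝ (Fin d)) (a : ℝ) : Traj d → ℕ∞ :=
  hitTime {x | a ≤ dotl x ℓ}

/-- `Y` is obtained from `X` by erasing a single loop. -/
def EraseOne {α : Type*} (X Y : ℕ → α) : Prop :=
  ∃ m n : ℕ, m < n ∧ X m = X n ∧ Y = fun i => if i < m then X i else X (i + (n - m))

/-- `ℰ(X)`: all paths obtained from `X` by erasing finitely many loops in any order. -/
def LoopErasures {α : Type*} (X : ℕ → α) : Set (ℕ → α) :=
  {Y | Relation.ReflTransGen EraseOne X Y}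

/-- The event `B_ℓ`. -/
def Bdir {d : ℕ} (ℓ : EuclideanSpace ℝ (Fin d)) : Set (Traj d) :=
  {X | ∃ Y ∈ LoopErasures X, Tlt ℓ 0 Y = ⊤}

/-- The path `X` stopped at the (possibly infinite) time `T`;
for `n ≥ T` it stays at `X_T`. -/
def stopped {α : Type*} (X : ℕ → α) (T : ℕ∞) : ℕ → α :=
  fun n => if (n : ℕ∞) < T then X n else X T.toNat

/-- The event `G_a^b` (for `a < b` it uses `T_{≥b}`, for `a > b` it uses `T_{≤b}`). -/
def Gset {d : ℕ} (ℓ : EuclideanSpace ℝ (Fin d)) (a b : ℝ) : Set (Traj d) :=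
  if a < b then
    {X | Tge ℓ b X ≠ ⊤ ∧
      ∃ Y ∈ LoopErasures (stopped X (Tge ℓ b X)), Tge ℓ b Y < Tlt ℓ a Y}
  else
    {X | Tle ℓ b X ≠ ⊤ ∧
      ∃ Y ∈ LoopErasures (stopped X (Tle ℓ b X)), Tle ℓ b Y < Tgt ℓ a Y}

/-!
Everything happens pathwise. Finitely many loop erasures only shift a path from some time on, so
on `A_{-ℓ}` every loop erasure eventually goes below `0` and the path never reaches a high
level `L`: neither `B_ℓ` nor `G_0^L` occurs. On `A_ℓ`, once `L` exceeds the path on the stretch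
touched by the erasures, loop erasures of `X` and of `X` stopped at `T_{≥L}` correspond: the
loops erased by a witness of `B_ℓ` close before `T_{≥L}`, and conversely an erasure of the
stopped path cannot remove a loop through `X_{T_{≥L}}`, which is first visited at `T_{≥L}`.
Hence the indicators of `G_0^L` converge almost surely to that of `B_ℓ`, and dominated
convergence gives the limits.
-/
section HitTime

variable {α : Type*} {A B : Set α} {X : ℕ → α}

lemma hitTime_lt_coe_iff {k : ℕ} : hitTime A X < k ↔ ∃ j < k, X j ∈ A := by
  simp [hitTime, iInf_lt_iff, and_comm]

lemma hitTime_le_coe_iff {k : ℕ} : hitTime A X ≤ k ↔ ∃ j ≤ k, X j ∈ A := by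
  rw [← ENat.lt_add_one_iff (ENat.natCast_ne_top k), ← Nat.cast_succ, hitTime_lt_coe_iff]
  simp only [Nat.lt_succ_iff]

lemma coe_lt_hitTime_iff {k : ℕ} : (k : ℕ∞) < hitTime A X ↔ ∀ j ≤ k, X j ∉ A := by
  simpa using hitTime_le_coe_iff.not

lemma hitTime_eq_top_iff : hitTime A X = ⊤ ↔ ∀ k, X k ∉ A := by
  simp [hitTime, iInf_eq_top]

lemma hitTime_eq_coe_iff {t : ℕ} : hitTime A X = t ↔ X t ∈ A ∧ ∀ j < t, X j ∉ A := by
  rw [le_antisymm_iff, hitTime_le_coe_iff, ← not_lt, hitTime_lt_coe_iff]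
  constructor
  · rintro ⟨⟨j, hjt, hj⟩, hbefore⟩
    obtain rfl : j = t := by
      by_contra hne
      exact hbefore ⟨j, by omega, hj⟩
    exact ⟨hj, fun i hi hiA => hbefore ⟨i, hi, hiA⟩⟩
  · rintro ⟨ht, hbefore⟩
    exact ⟨⟨t, le_rfl, ht⟩, fun ⟨i, hi, hiA⟩ => hbefore i hi hiA⟩

lemma hitTime_lt_hitTime_iff :
    hitTime A X < hitTime B X ↔ ∃ k, X k ∈ A ∧ ∀ j ≤ k, X j ∉ B := by
  constructor
  · intro h
    obtain ⟨t, ht⟩ := ENat.ne_top_iff_exists.mp h.ne_top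
    rw [← ht] at h
    exact ⟨t, (hitTime_eq_coe_iff.mp ht.symm).1, coe_lt_hitTime_iff.mp h⟩
  · rintro ⟨k, hkA, hkB⟩
    exact (hitTime_le_coe_iff.mpr ⟨k, le_rfl, hkA⟩).trans_lt (coe_lt_hitTime_iff.mpr hkB)

end HitTime

section LoopErasure

variable {α : Type*}

def eraseLoop (m n : ℕ) (X : ℕ → α) : ℕ → α :=
  fun i => if i < m then X i else X (i + (n - m))

lemma eraseOne_iff {X Y : ℕ → α} :
    EraseOne X Y ↔ ∃ m n, m < n ∧ X m = X n ∧ Y = eraseLoop m n X :=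
  Iff.rfl

lemma stopped_coe (X : ℕ → α) (t : ℕ) :
    stopped X t = fun i => if i < t then X i else X t := by
  funext i
  simp only [stopped, ENat.toNat_natCast, Nat.cast_lt]

lemma eraseLoop_stopped {X : ℕ → α} {m n t : ℕ} (hmt : m < t) :
    eraseLoop m n (stopped X ↑(t + (n - m))) = stopped (eraseLoop m n X) t := by
  funext i
  simp only [eraseLoop, stopped_coe]
  split_ifs <;> first | rfl | omega

lemma eraseLoop_stopped_of_le {X : ℕ → α} {m n t : ℕ} (htm : t ≤ m) :
    eraseLoop m n (stopped X t) = stopped X t := by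
  funext i
  simp only [eraseLoop, stopped_coe]
  split_ifs <;> first | rfl | omega

lemma exists_shift_of_mem_loopErasures {X Y : ℕ → α} (h : Y ∈ LoopErasures X) :
    ∃ c N : ℕ, (∀ i ≥ N, Y i = X (i + c)) ∧
      ∀ t ≥ N, stopped Y t ∈ LoopErasures (stopped X ↑(t + c)) := by
  induction h with
  | refl => exact ⟨0, 0, fun i _ => rfl, fun t _ => .refl⟩
  | tail _ hstep ih =>
    rename_i Y Z
    obtain ⟨m, n, hmn, hloop, rfl⟩ := eraseOne_iff.mp hstep
    obtain ⟨c, N, hshift, hstop⟩ := ih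
    refine ⟨n - m + c, N + n + 1, fun i hi => ?_, fun t ht => ?_⟩
    · simp only [eraseLoop, if_neg (show ¬ i < m by omega),
        hshift _ (show i + (n - m) ≥ N by omega)]
      rw [add_assoc]
    · rw [← eraseLoop_stopped (by omega), ← add_assoc]
      refine (hstop _ (by omega)).tail ⟨m, n, hmn, ?_, rfl⟩
      simp only [stopped_coe, if_pos (show m < t + (n - m) by omega),
        if_pos (show n < t + (n - m) by omega), hloop]

lemma tendsto_comp_of_mem_loopErasures {β : Type*} {f : α → β} {l : Filter β}
    {X Y : ℕ → α} (hY : Y ∈ LoopErasures X) (hX : Tendsto (f ∘ X) atTop l) :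
    Tendsto (f ∘ Y) atTop l := by
  obtain ⟨c, N, hshift, -⟩ := exists_shift_of_mem_loopErasures hY
  refine (hX.comp (tendsto_add_atTop_nat c)).congr' ?_
  filter_upwards [eventually_ge_atTop N] with i hi
  simp [hshift i hi]

lemma exists_loopErasure_eq_stopped {X Z : ℕ → α} {T : ℕ} (hT : ∀ n < T, X n ≠ X T)
    (h : Z ∈ LoopErasures (stopped X T)) :
    ∃ Y ∈ LoopErasures X, ∃ S : ℕ, Z = stopped Y S ∧ (∀ j, Y (S + j) = X (T + j)) ∧
      ∀ i < S, ∃ n < T, Y i = X n := by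
  induction h with
  | refl => exact ⟨X, .refl, T, rfl, fun _ => rfl, fun i hi => ⟨i, hi, rfl⟩⟩
  | tail _ hstep ih =>
    obtain ⟨m, n, hmn, hloop, rfl⟩ := eraseOne_iff.mp hstep
    obtain ⟨Y, hY, S, rfl, hsuffix, hprefix⟩ := ih
    rcases lt_or_ge n S with hnS | hSn
    · obtain ⟨S, rfl⟩ : ∃ S', S = S' + (n - m) := ⟨S - (n - m), by omega⟩
      have hYloop : Y m = Y n := by
        simpa only [stopped_coe, if_pos (show m < S + (n - m) by omega),
          if_pos (show n < S + (n - m) by omega)] using hloop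
      refine ⟨eraseLoop m n Y, hY.tail ⟨m, n, hmn, hYloop, rfl⟩, S,
        eraseLoop_stopped (by omega), fun j => ?_, fun i hi => ?_⟩
      · simp only [eraseLoop, if_neg (show ¬ S + j < m by omega)]
        rw [← hsuffix j]
        congr 1
        omega
      · simp only [eraseLoop]
        split_ifs
        · exact hprefix i (by omega)
        · exact hprefix _ (by omega)
    · rcases lt_or_ge m S with hmS | hSm
      · -- the loop would join a point visited before `T` to `X T`
        exfalso
        obtain ⟨k, hk, hYm⟩ := hprefix m hmS
        have hYS : Y S = X T := by simpa using hsuffix 0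
        refine hT k hk ?_
        simpa only [stopped_coe, if_pos hmS, if_neg (show ¬ n < S by omega), hYm, hYS] using hloop
      · exact ⟨Y, hY, S, eraseLoop_stopped_of_le hSm, hsuffix, hprefix⟩

end LoopErasure

section Deterministic

variable {d : ℕ} {ℓ : EuclideanSpace ℝ (Fin d)} {X : Traj d}

lemma Gset_of_lt {a b : ℝ} (h : a < b) :
    Gset ℓ a b = {X | Tge ℓ b X ≠ ⊤ ∧
      ∃ Y ∈ LoopErasures (stopped X (Tge ℓ b X)), Tge ℓ b Y < Tlt ℓ a Y} :=
  if_pos h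

lemma eventually_forall_dotl_lt (ℓ : EuclideanSpace ℝ (Fin d)) (X : Traj d) (N : ℕ) :
    ∀ᶠ L in atTop, ∀ n ≤ N, dotl (X n) ℓ < L :=
  (eventually_all_finite (Set.finite_Iic N)).2 fun _ _ => eventually_gt_atTop _

lemma exists_Tge_eq_of_mem_Adir (hX : X ∈ Adir ℓ) (L : ℝ) : ∃ t : ℕ, Tge ℓ L X = t :=
  have hfinite : Tge ℓ L X ≠ ⊤ := fun h => by
    obtain ⟨n, hn⟩ := (hX.eventually_ge_atTop L).exists
    exact hitTime_eq_top_iff.mp h n hn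
  ⟨_, (ENat.natCast_toNat hfinite).symm⟩

lemma lt_of_forall_dotl_lt {N t : ℕ} {L : ℝ} (hbelow : ∀ n ≤ N, dotl (X n) ℓ < L)
    (ht : L ≤ dotl (X t) ℓ) : N < t := by
  by_contra! h
  exact (hbelow t h).not_ge ht

lemma eventually_mem_Gset_of_mem_Bdir (hX : X ∈ Adir ℓ) (hB : X ∈ Bdir ℓ) :
    ∀ᶠ L in atTop, X ∈ Gset ℓ 0 L := by
  obtain ⟨Y, hY, hYnonneg⟩ := hB
  obtain ⟨c, N, hshift, hstop⟩ := exists_shift_of_mem_loopErasures hY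
  filter_upwards [eventually_gt_atTop 0, eventually_forall_dotl_lt ℓ X (N + c)] with L hL hbelow
  obtain ⟨t, ht⟩ := exists_Tge_eq_of_mem_Adir hX L
  have hXt : L ≤ dotl (X t) ℓ := (hitTime_eq_coe_iff.mp ht).1
  have hNt := lt_of_forall_dotl_lt hbelow hXt
  obtain ⟨s, rfl⟩ : ∃ s, t = s + c := ⟨t - c, by omega⟩
  have hs : N ≤ s := by omega
  rw [Gset_of_lt hL]
  refine ⟨by simp [ht], stopped Y s, ht ▸ hstop s hs,
    hitTime_lt_hitTime_iff.mpr ⟨s, ?_, ?_⟩⟩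
  · simpa [stopped_coe, hshift s hs] using hXt
  · intro j _
    simp only [stopped_coe]
    split_ifs
    exacts [hitTime_eq_top_iff.mp hYnonneg j, hitTime_eq_top_iff.mp hYnonneg s]

lemma eventually_mem_Bdir_of_mem_Gset (hX : X ∈ Adir ℓ) :
    ∀ᶠ L in atTop, X ∈ Gset ℓ 0 L → X ∈ Bdir ℓ := by
  obtain ⟨N, hN⟩ := eventually_atTop.mp (hX.eventually_ge_atTop 0)
  filter_upwards [eventually_gt_atTop 0, eventually_forall_dotl_lt ℓ X N] with L hL hbelow hG
  rw [Gset_of_lt hL] at hG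
  obtain ⟨-, Z, hZ, hZlt⟩ := hG
  obtain ⟨t, ht⟩ := exists_Tge_eq_of_mem_Adir hX L
  obtain ⟨hXt, hbefore⟩ := hitTime_eq_coe_iff.mp ht
  have hNt := lt_of_forall_dotl_lt hbelow hXt
  rw [ht] at hZ
  obtain ⟨Y, hY, S, rfl, hsuffix, hprefix⟩ :=
    exists_loopErasure_eq_stopped
      (fun n hn h => hbefore n hn (show L ≤ dotl (X n) ℓ by rw [h]; exact hXt)) hZ
  obtain ⟨k, hkL, hk0⟩ := hitTime_lt_hitTime_iff.mp hZlt
  have hSk : S ≤ k := by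
    by_contra! hkS
    obtain ⟨n, hn, hYk⟩ := hprefix k (by omega)
    exact hbefore n hn (by simpa [stopped_coe, hkS, hYk] using hkL)
  refine ⟨Y, hY, hitTime_eq_top_iff.mpr fun i hi => ?_⟩
  rcases lt_or_ge i S with hiS | hSi
  · exact hk0 i (by omega) (by simpa [stopped_coe, hiS] using hi)
  · obtain ⟨j, rfl⟩ : ∃ j, i = S + j := ⟨i - S, by omega⟩
    have hi : dotl (Y (S + j)) ℓ < 0 := hi
    rw [hsuffix] at hi
    linarith [hN (t + j) (by omega)]

lemma notMem_Bdir_of_mem_AdirNeg (hX : X ∈ AdirNeg ℓ) : X ∉ Bdir ℓ := by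
  rintro ⟨Y, hY, hYnonneg⟩
  have hYneg := tendsto_comp_of_mem_loopErasures (f := fun x => dotl x ℓ) hY hX
  obtain ⟨i, hi⟩ := (hYneg.eventually_lt_atBot 0).exists
  exact hitTime_eq_top_iff.mp hYnonneg i hi

lemma eventually_notMem_Gset_of_mem_AdirNeg (hX : X ∈ AdirNeg ℓ) :
    ∀ᶠ L in atTop, X ∉ Gset ℓ 0 L := by
  obtain ⟨N, hN⟩ := eventually_atTop.mp (hX.eventually_le_atBot 0)
  filter_upwards [eventually_gt_atTop 0, eventually_forall_dotl_lt ℓ X N] with L hL hbelow hG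
  rw [Gset_of_lt hL] at hG
  refine hG.1 (hitTime_eq_top_iff.mpr fun n hn => ?_)
  have hn : L ≤ dotl (X n) ℓ := hn
  rcases le_total n N with h | h
  · exact (hbelow n h).not_ge hn
  · linarith [hN n h]

theorem eventually_mem_Gset_iff_mem_Bdir (hX : X ∈ Adir ℓ ∪ AdirNeg ℓ) :
    ∀ᶠ L in atTop, X ∈ Gset ℓ 0 L ↔ X ∈ Bdir ℓ := by
  rcases hX with hX | hX
  · by_cases hB : X ∈ Bdir ℓ
    · filter_upwards [eventually_mem_Gset_of_mem_Bdir hX hB] with L hG using iff_of_true hG hB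
    · filter_upwards [eventually_mem_Bdir_of_mem_Gset hX] with L h using iff_of_false (mt h hB) hB
  · filter_upwards [eventually_notMem_Gset_of_mem_AdirNeg hX] with L hG
      using iff_of_false hG (notMem_Bdir_of_mem_AdirNeg hX)

end Deterministic

section Measurability

variable {α : Type*} [MeasurableSpace α]

lemma measurable_hitTime {A : Set α} (hA : MeasurableSet A) :
    Measurable (hitTime A : (ℕ → α) → ℕ∞) := by
  refine measurable_to_countable' fun k => ?_
  induction k using ENat.recTopCoe with
  | top =>
    have : hitTime A ⁻¹' {⊤} = ⋂ k, (· k) ⁻¹' Aᶜ := by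
      ext X
      simp [hitTime_eq_top_iff]
    rw [this]
    exact .iInter fun k => measurable_pi_apply k hA.compl
  | coe t =>
    have : hitTime A ⁻¹' {(t : ℕ∞)} =
        (· t) ⁻¹' A ∩ ⋂ j, ⋂ (_ : j < t), (· j) ⁻¹' Aᶜ := by
      ext X
      simp [hitTime_eq_coe_iff]
    rw [this]
    exact (measurable_pi_apply t hA).inter
      (.iInter fun j => .iInter fun _ => measurable_pi_apply j hA.compl)

lemma measurable_stopped {T : (ℕ → α) → ℕ∞} (hT : Measurable T) :
    Measurable fun X => stopped X (T X) := by
  have heval : Measurable fun p : (ℕ → α) × ℕ => p.1 p.2 :=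
    measurable_from_prod_countable_left fun k => measurable_pi_apply k
  refine measurable_pi_lambda _ fun n => Measurable.ite ?_ (measurable_pi_apply n) ?_
  · exact hT (Set.to_countable {k : ℕ∞ | (n : ℕ∞) < k}).measurableSet
  · exact heval.comp (measurable_id.prodMk ((measurable_of_countable ENat.toNat).comp hT))

lemma measurable_eraseLoop (m n : ℕ) : Measurable (eraseLoop m n : (ℕ → α) → ℕ → α) :=
  measurable_pi_lambda _ fun i => by
    unfold eraseLoop
    split_ifs <;> exact measurable_pi_apply _

variable [MeasurableSingletonClass α] [Countable α]

lemma measurable_hitTime_of_countable (A : Set α) :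
    Measurable (hitTime A : (ℕ → α) → ℕ∞) :=
  measurable_hitTime A.to_countable.measurableSet

lemma measurableSet_exists_eraseOne {V : Set (ℕ → α)} (hV : MeasurableSet V) :
    MeasurableSet {X | ∃ Y, EraseOne X Y ∧ Y ∈ V} := by
  have : {X | ∃ Y, EraseOne X Y ∧ Y ∈ V} =
      ⋃ m, ⋃ n, ⋃ (_ : m < n), {X | X m = X n} ∩ eraseLoop m n ⁻¹' V := by
    ext X
    simp only [eraseOne_iff]
    aesop
  rw [this]
  exact .iUnion fun m => .iUnion fun n => .iUnion fun _ =>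
    (measurableSet_eq_fun (measurable_pi_apply m) (measurable_pi_apply n)).inter
      (measurable_eraseLoop m n hV)

lemma measurableSet_exists_mem_loopErasures {U : Set (ℕ → α)} (hU : MeasurableSet U) :
    MeasurableSet {X | ∃ Y ∈ LoopErasures X, Y ∈ U} := by
  set step : Set (ℕ → α) → Set (ℕ → α) :=
    fun V => V ∪ {X | ∃ Y, EraseOne X Y ∧ Y ∈ V}
  have : {X | ∃ Y ∈ LoopErasures X, Y ∈ U} = ⋃ k, step^[k] U := by
    ext X
    simp only [Set.mem_iUnion]
    constructor
    · rintro ⟨Y, hY, hYU⟩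
      induction hY using Relation.ReflTransGen.head_induction_on with
      | refl => exact ⟨0, hYU⟩
      | head hstep _ ih =>
        obtain ⟨k, hk⟩ := ih
        exact ⟨k + 1, by rw [Function.iterate_succ_apply']; exact Or.inr ⟨_, hstep, hk⟩⟩
    · rintro ⟨k, hk⟩
      induction k generalizing X with
      | zero => exact ⟨X, .refl, hk⟩
      | succ k ih =>
        rw [Function.iterate_succ_apply'] at hk
        rcases hk with hk | ⟨Y, hstep, hY⟩
        · exact ih X hk
        · obtain ⟨Z, hZ, hZU⟩ := ih Y hY
          exact ⟨Z, .head hstep hZ, hZU⟩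
  rw [this]
  refine .iUnion fun k => ?_
  induction k with
  | zero => exact hU
  | succ k ih =>
    rw [Function.iterate_succ_apply']
    exact ih.union (measurableSet_exists_eraseOne ih)

end Measurability

section MeasurableEvents

variable {d : ℕ} (ℓ : EuclideanSpace ℝ (Fin d))

lemma measurable_dotl_apply (n : ℕ) : Measurable fun X : Traj d => dotl (X n) ℓ :=
  (measurable_of_countable fun x : Zd d => dotl x ℓ).comp (measurable_pi_apply n)

lemma measurableSet_Adir : MeasurableSet (Adir ℓ) :=
  measurableSet_tendsto atTop (measurable_dotl_apply ℓ)

lemma measurableSet_AdirNeg : MeasurableSet (AdirNeg ℓ) :=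
  measurableSet_tendsto atBot (measurable_dotl_apply ℓ)

lemma measurableSet_Bdir : MeasurableSet (Bdir ℓ) :=
  measurableSet_exists_mem_loopErasures
    (measurable_hitTime_of_countable _ (measurableSet_singleton ⊤))

lemma measurableSet_Gset (a b : ℝ) : MeasurableSet (Gset ℓ a b) := by
  unfold Gset
  split_ifs
  all_goals
    refine (measurable_hitTime_of_countable _ (measurableSet_singleton ⊤)).compl.inter
      (measurable_stopped (measurable_hitTime_of_countable _)
        (measurableSet_exists_mem_loopErasures ?_))
    exact (measurable_hitTime_of_countable _).prodMk (measurable_hitTime_of_countable _)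
      (Set.to_countable {p : ℕ∞ × ℕ∞ | p.1 < p.2}).measurableSet

end MeasurableEvents

theorem B_symmDiff_G_vanishes_general
    (P : Measure (EnvSp 2)) [IsProbabilityMeasure P]
    (κ : Zd 2 → Kernel (EnvSp 2) (Traj 2)) [∀ x, IsMarkovKernel (κ x)]
    (ℓ : EuclideanSpace ℝ (Fin 2))
    (hA : ann P κ 0 (Adir ℓ ∪ AdirNeg ℓ) = 1) :
    Tendsto (fun L : ℝ => ann P κ 0 (symmDiff (Bdir ℓ) (Gset ℓ 0 L))) atTop (𝓝 0) ∧
    Tendsto (fun L : ℝ => ann P κ 0 (Gset ℓ 0 L)) atTop (𝓝 (ann P κ 0 (Bdir ℓ))) := by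
  have : IsProbabilityMeasure (ann P κ 0) :=
    inferInstanceAs (IsProbabilityMeasure ((κ 0) ∘ₘ P))
  have hlim : ∀ᵐ X ∂ann P κ 0, ∀ᶠ L in atTop, X ∈ Gset ℓ 0 L ↔ X ∈ Bdir ℓ := by
    filter_upwards [(mem_ae_iff_prob_eq_one
      ((measurableSet_Adir ℓ).union (measurableSet_AdirNeg ℓ))).2 hA] with X hX
    exact eventually_mem_Gset_iff_mem_Bdir hX
  refine ⟨?_, tendsto_measure_of_ae_tendsto_indicator_of_isFiniteMeasure _
    (measurableSet_Bdir ℓ) (measurableSet_Gset ℓ 0) hlim⟩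
  simpa using tendsto_measure_of_ae_tendsto_indicator_of_isFiniteMeasure (A := ∅) atTop
    .empty (fun L => (measurableSet_Bdir ℓ).symmDiff (measurableSet_Gset ℓ 0 L))
    (hlim.mono fun X hX => hX.mono fun L hL => by simp [Set.mem_symmDiff, hL])

/-- Equations (246) and (243) of the paper: assuming `P⁰(A_ℓ ∪ A_{-ℓ}) = 1`,
`lim_{L→∞} P⁰(B_ℓ △ G_0^L) = 0`, and in particular
`lim_{L→∞} P⁰(G_0^L) = P⁰(B_ℓ)`. -/
theorem B_symmDiff_G_vanishes
    (P : Measure (EnvSp 2)) [IsProbabilityMeasure P]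
    (κ : Zd 2 → Kernel (EnvSp 2) (Traj 2)) [∀ x, IsMarkovKernel (κ x)]
    (hκ : IsQuenched κ)
    (hC1 : CondC1 P) (R : ℝ) (hC2 : CondC2 P R) (hC3 : CondC3 P)
    (ℓ : EuclideanSpace ℝ (Fin 2)) (hℓ : ‖ℓ‖ = 1)
    (hA : ann P κ 0 (Adir ℓ ∪ AdirNeg ℓ) = 1) :
    Tendsto (fun L : ℝ => ann P κ 0 (symmDiff (Bdir ℓ) (Gset ℓ 0 L))) atTop (𝓝 0) ∧
    Tendsto (fun L : ℝ => ann P κ 0 (Gset ℓ 0 L)) atTop (𝓝 (ann P κ 0 (Bdir ℓ))) :=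
  B_symmDiff_G_vanishes_general P κ ℓ hA
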